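/- arXiv:2004.11432 — 4 statements merged into one kernel-verified Lean document; each statement's English description precedes it below -/
import Mathlib

section
/- Let f₀ be μ-strongly convex and f₁, f₂ convex on ℝ^p, all real-valued. Suppose x⁺ minimizes f₀(x) + f₂(x) + ⟨g₁, x⟩ where g₁ ∈ ∂f₁(x₁), and g₂ ∈ ∂f₂(x⁺) satisfies 0 ∈ ∂f₀(x⁺) + g₁ + g₂. Then x⁺ also minimizes the function f₀(x) + [f₂(x⁺) + ⟨g₂, x − x⁺⟩] + [f₁(x₁) + ⟨g₁, x − x₁⟩], and the two problems have the same optimal value. -/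
/-!
The optimality condition says that `-(g₁ + g₂)` is a subgradient of `f₀` at `x⁺`, i.e. that `x⁺`
minimizes `f₀ + ⟪g₁ + g₂, ·⟫`; the relinearized objective differs from this function by a
constant. At `x⁺` the linearization of `f₂` is exact, so the two optimal values agree.
-/

open scoped RealInnerProductSpace

theorem le_add_inner_sub_of_neg_subgradient {E : Type*} [NormedAddCommGroup E]
    [InnerProductSpace ℝ E] {f : E → ℝ} {g x₀ : E}
    (hg : ∀ y, f x₀ + ⟪-g, y - x₀⟫ ≤ f y) (y : E) :
    f x₀ ≤ f y + ⟪g, y - x₀⟫ := by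
  have h := hg y
  rw [inner_neg_left] at h
  linarith

theorem stmt_4_general (p : ℕ)
    (f₀ f₁ f₂ : EuclideanSpace ℝ (Fin p) → ℝ)
    (x₁ g₁ xp g₂ : EuclideanSpace ℝ (Fin p))
    (hopt : ∀ x, f₀ xp + ⟪-(g₁ + g₂), x - xp⟫ ≤ f₀ x) :
    (∀ x, f₀ xp + (f₂ xp + ⟪g₂, xp - xp⟫) + (f₁ x₁ + ⟪g₁, xp - x₁⟫) ≤
        f₀ x + (f₂ xp + ⟪g₂, x - xp⟫) + (f₁ x₁ + ⟪g₁, x - x₁⟫)) ∧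
      f₀ xp + (f₂ xp + ⟪g₂, xp - xp⟫) + (f₁ x₁ + ⟪g₁, xp - x₁⟫) =
        f₀ xp + f₂ xp + (f₁ x₁ + ⟪g₁, xp - x₁⟫) := by
  have exact_at_xp : ⟪g₂, xp - xp⟫ = 0 := by rw [sub_self, inner_zero_right]
  refine ⟨fun x => ?_, by rw [exact_at_xp, add_zero]⟩
  have hmin := le_add_inner_sub_of_neg_subgradient hopt x
  have split : ⟪g₁, x - x₁⟫ = ⟪g₁, x - xp⟫ + ⟪g₁, xp - x₁⟫ := by
    rw [← inner_add_right, sub_add_sub_cancel]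
  rw [inner_add_left] at hmin
  linarith

/-- after relinearizing `f₂` at the new minimizer with the
optimality-condition subgradient, the same point is still a minimizer and the
optimal value is unchanged. -/
theorem stmt_4 (p : ℕ) (μ : ℝ) (hμ : 0 < μ)
    (f₀ f₁ f₂ : EuclideanSpace ℝ (Fin p) → ℝ)
    (hf₀ : ConvexOn ℝ Set.univ (fun x => f₀ x - μ / 2 * ‖x‖ ^ 2))
    (hf₁ : ConvexOn ℝ Set.univ f₁) (hf₂ : ConvexOn ℝ Set.univ f₂)
    (x₁ g₁ xp g₂ : EuclideanSpace ℝ (Fin p))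
    (hg₁ : ∀ x, f₁ x₁ + ⟪g₁, x - x₁⟫ ≤ f₁ x)
    (hxp : ∀ x, f₀ xp + f₂ xp + (f₁ x₁ + ⟪g₁, xp - x₁⟫) ≤
      f₀ x + f₂ x + (f₁ x₁ + ⟪g₁, x - x₁⟫))
    (hg₂ : ∀ x, f₂ xp + ⟪g₂, x - xp⟫ ≤ f₂ x)
    (hopt : ∀ x, f₀ xp + ⟪-(g₁ + g₂), x - xp⟫ ≤ f₀ x) :
    (∀ x, f₀ xp + (f₂ xp + ⟪g₂, xp - xp⟫) + (f₁ x₁ + ⟪g₁, xp - x₁⟫) ≤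
        f₀ x + (f₂ xp + ⟪g₂, x - xp⟫) + (f₁ x₁ + ⟪g₁, x - x₁⟫)) ∧
      f₀ xp + (f₂ xp + ⟪g₂, xp - xp⟫) + (f₁ x₁ + ⟪g₁, xp - x₁⟫) =
        f₀ xp + f₂ xp + (f₁ x₁ + ⟪g₁, xp - x₁⟫) :=
  stmt_4_general p f₀ f₁ f₂ x₁ g₁ xp g₂ hopt
end

section
/- Let f₀ be μ-strongly convex and f₁,…,fₙ convex on ℝ^p. Consider two successive surrogate functions f^(t)(x) = f₀(x) + f_{j}(x) + Σ_{i≠j}[fᵢ(xᵢ) + ⟨gᵢ, x − xᵢ⟩] and f^(t+1)(x) = f₀(x) + f_{j'}(x) + Σ_{i≠j'}[fᵢ(xᵢ') + ⟨gᵢ', x − xᵢ'⟩] obtained by one step of the StochaLM update (relinearizing f_j at its new minimizer with the optimality-condition subgradient, keeping other anchors fixed). Then inf f^(t) ≤ inf f^(t+1). -/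
/-!
Let `ℓᵢ` be the affine minorant of `fᵢ` at its anchor. The new anchor `x'ⱼ` is chosen so that
`-(∑ᵢ g'ᵢ)` is a subgradient of `f₀` there; since `∑ᵢ ℓ'ᵢ` is affine with slope `∑ᵢ g'ᵢ`,
this makes `x'ⱼ` a global minimizer of `f₀ + ∑ᵢ ℓ'ᵢ`. Every new surrogate dominates
`f₀ + ∑ᵢ ℓ'ᵢ`, and at `x'ⱼ` this function agrees with the old surrogate, because `ℓ'ⱼ` is exact
at its own anchor and the other anchors did not move. Hence the old surrogate attains its
infimum at `x'ⱼ` (the case `j' = j`), and that minimum lies below every value of the new one.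
-/

open Finset
open scoped RealInnerProductSpace

variable {E ι : Type*} [NormedAddCommGroup E] [InnerProductSpace ℝ E]

def linModel (f : E → ℝ) (a g z : E) : ℝ := f a + ⟪g, z - a⟫

lemma linModel_eq_add_inner (f : E → ℝ) (a g y z : E) :
    linModel f a g z = linModel f a g y + ⟪g, z - y⟫ := by
  rw [linModel, linModel, add_assoc, ← inner_add_right, sub_add_sub_cancel']

lemma linModel_self (f : E → ℝ) (a g : E) : linModel f a g a = f a := by
  simp [linModel]

lemma sum_linModel_eq_add_inner (s : Finset ι) (f : ι → E → ℝ) (a g : ι → E) (y z : E) :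
    ∑ i ∈ s, linModel (f i) (a i) (g i) z =
      ∑ i ∈ s, linModel (f i) (a i) (g i) y + ⟪∑ i ∈ s, g i, z - y⟫ := by
  rw [sum_inner, ← sum_add_distrib]
  exact sum_congr rfl fun i _ => linModel_eq_add_inner _ _ _ y z

lemma add_sum_linModel_le_of_subgradient (s : Finset ι) (f₀ : E → ℝ) (f : ι → E → ℝ)
    (a g : ι → E) {y : E} (h : ∀ z, f₀ y + ⟪-∑ i ∈ s, g i, z - y⟫ ≤ f₀ z) (z : E) :
    f₀ y + ∑ i ∈ s, linModel (f i) (a i) (g i) y ≤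
      f₀ z + ∑ i ∈ s, linModel (f i) (a i) (g i) z := by
  have hz := h z
  rw [inner_neg_left] at hz
  rw [sum_linModel_eq_add_inner s f a g y z]
  linarith

section Surrogate

variable [Fintype ι] [DecidableEq ι]

def surrogate (f₀ : E → ℝ) (f : ι → E → ℝ) (a g : ι → E) (j : ι) (z : E) : ℝ :=
  f₀ z + f j z + ∑ i ∈ univ.erase j, linModel (f i) (a i) (g i) z

lemma surrogate_congr (f₀ : E → ℝ) (f : ι → E → ℝ) {a g a' g' : ι → E} (j : ι)
    (ha : ∀ i, i ≠ j → a' i = a i) (hg : ∀ i, i ≠ j → g' i = g i) :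
    surrogate f₀ f a' g' j = surrogate f₀ f a g j := by
  ext z
  refine congrArg _ (sum_congr rfl fun i hi => ?_)
  have hij := ne_of_mem_erase hi
  rw [ha i hij, hg i hij]

lemma surrogate_self (f₀ : E → ℝ) (f : ι → E → ℝ) (a g : ι → E) (j : ι) :
    surrogate f₀ f a g j (a j) = f₀ (a j) + ∑ i, linModel (f i) (a i) (g i) (a j) := by
  rw [surrogate, ← add_sum_erase _ _ (mem_univ j), linModel_self, add_assoc]

lemma add_sum_linModel_le_surrogate (f₀ : E → ℝ) (f : ι → E → ℝ) (a g : ι → E) {j : ι}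
    (hj : ∀ z, linModel (f j) (a j) (g j) z ≤ f j z) (z : E) :
    f₀ z + ∑ i, linModel (f i) (a i) (g i) z ≤ surrogate f₀ f a g j z := by
  rw [surrogate, ← add_sum_erase _ _ (mem_univ j)]
  linarith [hj z]

lemma surrogate_apply_le_surrogate_step (f₀ : E → ℝ) (f : ι → E → ℝ) (j : ι)
    (x g x' g' : ι → E) (hg : ∀ i z, linModel (f i) (x i) (g i) z ≤ f i z)
    (hg'j : ∀ z, linModel (f j) (x' j) (g' j) z ≤ f j z)
    (hopt : ∀ z, f₀ (x' j) + ⟪-(g' j + ∑ i ∈ univ.erase j, g i), z - x' j⟫ ≤ f₀ z)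
    (hx' : ∀ i, i ≠ j → x' i = x i) (hg' : ∀ i, i ≠ j → g' i = g i) (j' : ι) (z : E) :
    surrogate f₀ f x g j (x' j) ≤ surrogate f₀ f x' g' j' z := by
  have hsum : ∑ i, g' i = g' j + ∑ i ∈ univ.erase j, g i := by
    rw [← add_sum_erase _ _ (mem_univ j)]
    exact congrArg _ (sum_congr rfl fun i hi => hg' i (ne_of_mem_erase hi))
  have hj' : ∀ z, linModel (f j') (x' j') (g' j') z ≤ f j' z := by
    by_cases h : j' = j
    · exact h ▸ hg'j
    · rw [hx' j' h, hg' j' h]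
      exact hg j'
  calc surrogate f₀ f x g j (x' j)
      = f₀ (x' j) + ∑ i, linModel (f i) (x' i) (g' i) (x' j) := by
        rw [← surrogate_congr f₀ f j hx' hg', surrogate_self]
    _ ≤ f₀ z + ∑ i, linModel (f i) (x' i) (g' i) z :=
        add_sum_linModel_le_of_subgradient _ f₀ f x' g' (hsum ▸ hopt) z
    _ ≤ surrogate f₀ f x' g' j' z := add_sum_linModel_le_surrogate f₀ f x' g' hj' z

end Surrogate

theorem stmt_5_general (p n : ℕ)
    (f₀ : EuclideanSpace ℝ (Fin p) → ℝ)
    (f : Fin n → EuclideanSpace ℝ (Fin p) → ℝ)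
    (j j' : Fin n)
    (x g x' g' : Fin n → EuclideanSpace ℝ (Fin p))
    (hg : ∀ i z, f i (x i) + ⟪g i, z - x i⟫ ≤ f i z)
    -- `g' j` is a subgradient of `f j` at `x' j` ...
    (hg'j : ∀ z, f j (x' j) + ⟪g' j, z - x' j⟫ ≤ f j z)
    -- ... satisfying the first-order optimality condition
    (hopt : ∀ z,
      f₀ (x' j) + ⟪-(g' j + ∑ i ∈ Finset.univ.erase j, g i), z - x' j⟫ ≤ f₀ z)
    -- the remaining anchors and subgradients are unchanged
    (hx' : ∀ i, i ≠ j → x' i = x i) (hg' : ∀ i, i ≠ j → g' i = g i) :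
    (⨅ z : EuclideanSpace ℝ (Fin p),
        (f₀ z + f j z + ∑ i ∈ Finset.univ.erase j, (f i (x i) + ⟪g i, z - x i⟫))) ≤
      ⨅ z : EuclideanSpace ℝ (Fin p),
        (f₀ z + f j' z + ∑ i ∈ Finset.univ.erase j',
          (f i (x' i) + ⟪g' i, z - x' i⟫)) := by
  have step := surrogate_apply_le_surrogate_step f₀ f j x g x' g' hg hg'j hopt hx' hg'
  have hmin : ∀ z, surrogate f₀ f x g j (x' j) ≤ surrogate f₀ f x g j z := fun z => by
    simpa only [surrogate_congr f₀ f j hx' hg'] using step j z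
  calc (⨅ z, surrogate f₀ f x g j z)
      ≤ surrogate f₀ f x g j (x' j) := ciInf_le ⟨_, Set.forall_mem_range.2 hmin⟩ (x' j)
    _ ≤ ⨅ z, surrogate f₀ f x' g' j' z := le_ciInf (step j')

/-- one StochaLM step does not decrease the infimum of the
surrogate. -/
theorem stmt_5 (p n : ℕ) (μ : ℝ) (hμ : 0 < μ)
    (f₀ : EuclideanSpace ℝ (Fin p) → ℝ)
    (f : Fin n → EuclideanSpace ℝ (Fin p) → ℝ)
    (hf₀ : ConvexOn ℝ Set.univ (fun x => f₀ x - μ / 2 * ‖x‖ ^ 2))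
    (hf : ∀ i, ConvexOn ℝ Set.univ (f i))
    (j j' : Fin n)
    (x g x' g' : Fin n → EuclideanSpace ℝ (Fin p))
    (hg : ∀ i z, f i (x i) + ⟪g i, z - x i⟫ ≤ f i z)
    -- `x' j` minimizes the surrogate `f^(t)`
    (hmin : ∀ z,
      f₀ (x' j) + f j (x' j) + ∑ i ∈ Finset.univ.erase j,
          (f i (x i) + ⟪g i, x' j - x i⟫) ≤
        f₀ z + f j z + ∑ i ∈ Finset.univ.erase j, (f i (x i) + ⟪g i, z - x i⟫))
    -- `g' j` is a subgradient of `f j` at `x' j` ...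
    (hg'j : ∀ z, f j (x' j) + ⟪g' j, z - x' j⟫ ≤ f j z)
    -- ... satisfying the first-order optimality condition
    (hopt : ∀ z,
      f₀ (x' j) + ⟪-(g' j + ∑ i ∈ Finset.univ.erase j, g i), z - x' j⟫ ≤ f₀ z)
    -- the remaining anchors and subgradients are unchanged
    (hx' : ∀ i, i ≠ j → x' i = x i) (hg' : ∀ i, i ≠ j → g' i = g i) :
    (⨅ z : EuclideanSpace ℝ (Fin p),
        (f₀ z + f j z + ∑ i ∈ Finset.univ.erase j, (f i (x i) + ⟪g i, z - x i⟫))) ≤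
      ⨅ z : EuclideanSpace ℝ (Fin p),
        (f₀ z + f j' z + ∑ i ∈ Finset.univ.erase j',
          (f i (x' i) + ⟪g' i, z - x' i⟫)) :=
  stmt_5_general p n f₀ f j j' x g x' g' hg hg'j hopt hx' hg'
end

section
/- Let f₀ be μ-strongly convex and f₁,…,fₙ convex, all real-valued and continuous on ℝ^p. Suppose sequences x₀^(t), x₁^(t), …, xₙ^(t) all converge to a common limit x^∞, the subgradients gᵢ^(t) ∈ ∂fᵢ(xᵢ^(t)) are bounded, and for each t, f₀(x₀^(t)) + Σᵢ [fᵢ(xᵢ^(t)) + ⟨gᵢ^(t), x₀^(t) − xᵢ^(t)⟩] ≤ min F, where F = f₀ + Σᵢ fᵢ. Then x^∞ is the (unique) minimizer of F. -/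
open scoped RealInnerProductSpace

/-!
The surrogate values `f₀ x₀ + ∑ᵢ (fᵢ xᵢ + ⟪gᵢ, x₀ - xᵢ⟫)` converge to `F x^∞`: the `fᵢ` are
continuous, and the linearization terms vanish because the `gᵢ` are bounded while the
gaps `x₀ - xᵢ` tend to `0`. Passing to the limit in the hypothesis gives `F x^∞ ≤ min F`, so
`x^∞` is a minimizer of `F`, and strong convexity of `f₀` makes `F` strictly convex, whence the
minimizer is unique.
-/

open Filter Topology

theorem ConvexOn.finset_sum {𝕜 E β ι : Type*} [Semiring 𝕜] [PartialOrder 𝕜] [AddCommMonoid E]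
    [AddCommMonoid β] [PartialOrder β] [IsOrderedAddMonoid β] [SMul 𝕜 E] [Module 𝕜 β]
    {s : Set E} {t : Finset ι} {f : ι → E → β} (hs : Convex 𝕜 s)
    (hf : ∀ i ∈ t, ConvexOn 𝕜 s (f i)) : ConvexOn 𝕜 s fun x => ∑ i ∈ t, f i x := by
  classical
  induction t using Finset.induction_on with
  | empty => simpa using convexOn_const (0 : β) hs
  | insert j t hj ih =>
    simp only [Finset.sum_insert hj]
    exact (hf j (t.mem_insert_self j)).add (ih fun i hi => hf i (Finset.mem_insert_of_mem hi))

section InnerProductSpace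

variable {E α ι : Type*} [NormedAddCommGroup E] [InnerProductSpace ℝ E] {l : Filter α}

theorem tendsto_inner_zero_of_norm_le {g u : α → E} {M : ℝ} (hg : ∀ t, ‖g t‖ ≤ M)
    (hu : Tendsto u l (𝓝 0)) : Tendsto (fun t => ⟪g t, u t⟫) l (𝓝 0) := by
  have hbound : Tendsto (fun t => M * ‖u t‖) l (𝓝 0) := by
    simpa using (tendsto_zero_iff_norm_tendsto_zero.1 hu).const_mul M
  refine squeeze_zero_norm (fun t => ?_) hbound
  calc ‖⟪g t, u t⟫‖ ≤ ‖g t‖ * ‖u t‖ := norm_inner_le_norm _ _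
    _ ≤ M * ‖u t‖ := by gcongr; exact hg t

theorem tendsto_sum_linearization [Fintype ι] {f : ι → E → ℝ} {x : E} {y : α → E}
    {xs g : ι → α → E} {M : ℝ} (hf : ∀ i, ContinuousAt (f i) x) (hy : Tendsto y l (𝓝 x))
    (hxs : ∀ i, Tendsto (xs i) l (𝓝 x)) (hg : ∀ i t, ‖g i t‖ ≤ M) :
    Tendsto (fun t => ∑ i, (f i (xs i t) + ⟪g i t, y t - xs i t⟫)) l (𝓝 (∑ i, f i x)) := by
  refine tendsto_finsetSum _ fun i _ => ?_
  have hgap : Tendsto (fun t => y t - xs i t) l (𝓝 0) := by simpa using hy.sub (hxs i)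
  simpa using ((hf i).tendsto.comp (hxs i)).add (tendsto_inner_zero_of_norm_le (hg i) hgap)

theorem StrongConvexOn.strictConvexOn_add_sum [Fintype ι] {f₀ : E → ℝ} {f : ι → E → ℝ} {μ : ℝ}
    (hμ : 0 < μ) (hf₀ : StrongConvexOn Set.univ μ f₀) (hf : ∀ i, ConvexOn ℝ Set.univ (f i)) :
    StrictConvexOn ℝ Set.univ fun x => f₀ x + ∑ i, f i x :=
  (hf₀.strictConvexOn hμ).add_convexOn (ConvexOn.finset_sum convex_univ fun i _ => hf i)

end InnerProductSpace

theorem stmt_8_general (p n : ℕ) (μ : ℝ) (hμ : 0 < μ)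
    (f₀ : EuclideanSpace ℝ (Fin p) → ℝ)
    (f : Fin n → EuclideanSpace ℝ (Fin p) → ℝ)
    (hf₀ : ConvexOn ℝ Set.univ (fun x => f₀ x - μ / 2 * ‖x‖ ^ 2))
    (hf₀c : Continuous f₀)
    (hf : ∀ i, ConvexOn ℝ Set.univ (f i)) (hfc : ∀ i, Continuous (f i))
    (xstar : EuclideanSpace ℝ (Fin p))
    (hxstar : ∀ x, f₀ xstar + ∑ i, f i xstar ≤ f₀ x + ∑ i, f i x)
    (x0 : ℕ → EuclideanSpace ℝ (Fin p))
    (xs g : Fin n → ℕ → EuclideanSpace ℝ (Fin p))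
    (xinf : EuclideanSpace ℝ (Fin p))
    (hx0 : Filter.Tendsto x0 Filter.atTop (nhds xinf))
    (hxs : ∀ i, Filter.Tendsto (xs i) Filter.atTop (nhds xinf))
    (hgb : ∃ M : ℝ, ∀ i t, ‖g i t‖ ≤ M)
    (hval : ∀ t, f₀ (x0 t) + ∑ i, (f i (xs i t) + ⟪g i t, x0 t - xs i t⟫) ≤
      f₀ xstar + ∑ i, f i xstar) :
    xinf = xstar := by
  obtain ⟨M, hM⟩ := hgb
  have hlim : Tendsto (fun t => f₀ (x0 t) + ∑ i, (f i (xs i t) + ⟪g i t, x0 t - xs i t⟫))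
      atTop (𝓝 (f₀ xinf + ∑ i, f i xinf)) :=
    (hf₀c.continuousAt.tendsto.comp hx0).add
      (tendsto_sum_linearization (fun i => (hfc i).continuousAt) hx0 hxs hM)
  have hle : f₀ xinf + ∑ i, f i xinf ≤ f₀ xstar + ∑ i, f i xstar := le_of_tendsto' hlim hval
  have hF := (strongConvexOn_iff_convex.2 hf₀).strictConvexOn_add_sum hμ hf
  exact hF.eq_of_isMinOn (fun y _ => hle.trans (hxstar y)) (fun y _ => hxstar y) trivial trivial

/-- if all the iterates converge to a common limit, the
subgradients are bounded, and the surrogate values stay below `min F`, then the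
common limit is the (unique) minimizer of `F`. -/
theorem stmt_8 (p n : ℕ) (μ : ℝ) (hμ : 0 < μ)
    (f₀ : EuclideanSpace ℝ (Fin p) → ℝ)
    (f : Fin n → EuclideanSpace ℝ (Fin p) → ℝ)
    (hf₀ : ConvexOn ℝ Set.univ (fun x => f₀ x - μ / 2 * ‖x‖ ^ 2))
    (hf₀c : Continuous f₀)
    (hf : ∀ i, ConvexOn ℝ Set.univ (f i)) (hfc : ∀ i, Continuous (f i))
    (xstar : EuclideanSpace ℝ (Fin p))
    (hxstar : ∀ x, f₀ xstar + ∑ i, f i xstar ≤ f₀ x + ∑ i, f i x)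
    (x0 : ℕ → EuclideanSpace ℝ (Fin p))
    (xs g : Fin n → ℕ → EuclideanSpace ℝ (Fin p))
    (xinf : EuclideanSpace ℝ (Fin p))
    (hx0 : Filter.Tendsto x0 Filter.atTop (nhds xinf))
    (hxs : ∀ i, Filter.Tendsto (xs i) Filter.atTop (nhds xinf))
    (hg : ∀ i t z, f i (xs i t) + ⟪g i t, z - xs i t⟫ ≤ f i z)
    (hgb : ∃ M : ℝ, ∀ i t, ‖g i t‖ ≤ M)
    (hval : ∀ t, f₀ (x0 t) + ∑ i, (f i (xs i t) + ⟪g i t, x0 t - xs i t⟫) ≤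
      f₀ xstar + ∑ i, f i xstar) :
    xinf = xstar :=
  stmt_8_general p n μ hμ f₀ f hf₀ hf₀c hf hfc xstar hxstar x0 xs g xinf hx0 hxs hgb hval
end

section
/- Let f₀ be μ-strongly convex and f₁,…,fₙ convex on ℝ^p, all real-valued. Fix anchors xᵢ and subgradients gᵢ ∈ ∂fᵢ(xᵢ), and let x⁺ be the minimizer of f^(t)(x) = f₀(x) + f_j(x) + Σ_{i≠j}[fᵢ(xᵢ) + ⟨gᵢ, x − xᵢ⟩]. Then (μ/2)‖x⁺ − x*‖² ≤ F(x*) − f^(t)(x⁺), where x* is the minimizer of F = f₀ + Σᵢ fᵢ. In particular the surrogate minimizers remain within a ball around x* controlled by the surrogate gap. -/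
/-!
The surrogate `f⁽ᵗ⁾ = f₀ + f_j + ∑_{i ≠ j} (affine minorant of fᵢ at xᵢ)` is μ-strongly
convex, so it grows at least quadratically away from its minimizer:
`f⁽ᵗ⁾ x⁺ + μ/2 ‖x - x⁺‖² ≤ f⁽ᵗ⁾ x`. Take `x = x*` and use `f⁽ᵗ⁾ ≤ F`.
-/

open scoped RealInnerProductSpace
open Set Filter Topology

theorem ConvexOn.fun_sum {𝕜 E β ι : Type*} [Semiring 𝕜] [PartialOrder 𝕜]
    [AddCommMonoid E] [AddCommMonoid β] [PartialOrder β] [IsOrderedAddMonoid β] [SMul 𝕜 E]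
    [Module 𝕜 β] [PosSMulMono 𝕜 β] {s : Set E} {t : Finset ι} {f : ι → E → β} (hs : Convex 𝕜 s)
    (hf : ∀ i ∈ t, ConvexOn 𝕜 s (f i)) : ConvexOn 𝕜 s fun x => ∑ i ∈ t, f i x := by
  classical
  induction t using Finset.induction_on with
  | empty => simpa using convexOn_const (0 : β) hs
  | insert i t hi ih =>
    simp_rw [Finset.sum_insert hi]
    exact (hf i (t.mem_insert_self i)).add (ih fun k hk => hf k (Finset.mem_insert_of_mem hk))

section InnerProductSpace

variable {E : Type*} [NormedAddCommGroup E] [InnerProductSpace ℝ E]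

theorem convexOn_const_add_inner_sub (c : ℝ) (v a : E) :
    ConvexOn ℝ univ fun z => c + ⟪v, z - a⟫ := by
  have hlin : ConvexOn ℝ univ fun z => ⟪v, z⟫ := (innerₛₗ ℝ v).convexOn convex_univ
  have hform : (fun z => c + ⟪v, z - a⟫) = fun z => ⟪v, z⟫ + (c - ⟪v, a⟫) := by
    funext z
    rw [inner_sub_right]
    ring
  exact hform ▸ hlin.add_const _

end InnerProductSpace

section NormedSpace

variable {E : Type*} [NormedAddCommGroup E] [NormedSpace ℝ E] {s : Set E} {m : ℝ}
  {f g : E → ℝ}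

theorem StrongConvexOn.add_convexOn (hf : StrongConvexOn s m f) (hg : ConvexOn ℝ s g) :
    StrongConvexOn s m (f + g) := by
  simpa [StrongConvexOn] using hf.add (uniformConvexOn_zero.2 hg)

theorem StrongConvexOn.sq_norm_sub_le_of_isMinOn {x y : E} (hf : StrongConvexOn s m f)
    (hx : x ∈ s) (hy : y ∈ s) (hmin : IsMinOn f s x) :
    m / 2 * ‖y - x‖ ^ 2 ≤ f y - f x := by
  set c := m / 2 * ‖y - x‖ ^ 2
  have hshrunk : ∀ t ∈ Ioo (0 : ℝ) 1, (1 - t) * c ≤ f y - f x := by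
    rintro t ⟨ht₀, ht₁⟩
    have hconv := hf.2 hy hx ht₀.le (sub_nonneg.2 ht₁.le) (add_sub_cancel t 1)
    have hmin_t : f x ≤ f (t • y + (1 - t) • x) :=
      hmin (hf.1 hy hx ht₀.le (sub_nonneg.2 ht₁.le) (add_sub_cancel t 1))
    simp only [smul_eq_mul] at hconv
    refine le_of_mul_le_mul_left ?_ ht₀
    linear_combination hmin_t.trans hconv
  have hlim : Tendsto (fun t : ℝ => (1 - t) * c) (𝓝[>] 0) (𝓝 c) := by
    have : Continuous fun t : ℝ => (1 - t) * c := by fun_prop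
    simpa using (this.tendsto 0).mono_left nhdsWithin_le_nhds
  exact le_of_tendsto hlim (eventually_of_mem (Ioo_mem_nhdsGT one_pos) hshrunk)

end NormedSpace

theorem stmt_14_general (p n : ℕ) (μ : ℝ)
    (f₀ : EuclideanSpace ℝ (Fin p) → ℝ)
    (f : Fin n → EuclideanSpace ℝ (Fin p) → ℝ)
    (hf₀ : ConvexOn ℝ Set.univ (fun x => f₀ x - μ / 2 * ‖x‖ ^ 2))
    (hf : ∀ i, ConvexOn ℝ Set.univ (f i))
    (j : Fin n) (xa g : Fin n → EuclideanSpace ℝ (Fin p))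
    (hg : ∀ i z, f i (xa i) + ⟪g i, z - xa i⟫ ≤ f i z)
    (xstar : EuclideanSpace ℝ (Fin p))
    (xp : EuclideanSpace ℝ (Fin p))
    (hxp : ∀ z,
      f₀ xp + f j xp + ∑ i ∈ Finset.univ.erase j, (f i (xa i) + ⟪g i, xp - xa i⟫) ≤
        f₀ z + f j z + ∑ i ∈ Finset.univ.erase j, (f i (xa i) + ⟪g i, z - xa i⟫)) :
    μ / 2 * ‖xp - xstar‖ ^ 2 ≤
      (f₀ xstar + ∑ i, f i xstar) -
        (f₀ xp + f j xp +
          ∑ i ∈ Finset.univ.erase j, (f i (xa i) + ⟪g i, xp - xa i⟫)) := by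
  set surrogate := fun z =>
    f₀ z + f j z + ∑ i ∈ Finset.univ.erase j, (f i (xa i) + ⟪g i, z - xa i⟫)
  have hstrong : StrongConvexOn univ μ surrogate :=
    ((strongConvexOn_iff_convex.2 hf₀).add_convexOn (hf j)).add_convexOn <|
      ConvexOn.fun_sum convex_univ fun i _ => convexOn_const_add_inner_sub _ _ _
  have hgrowth : μ / 2 * ‖xstar - xp‖ ^ 2 ≤ surrogate xstar - surrogate xp :=
    hstrong.sq_norm_sub_le_of_isMinOn (mem_univ _) (mem_univ _) fun z _ => hxp z
  have hminorant : surrogate xstar ≤ f₀ xstar + ∑ i, f i xstar := by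
    rw [← Finset.add_sum_erase _ _ (Finset.mem_univ j)]
    have := Finset.sum_le_sum fun i (_ : i ∈ Finset.univ.erase j) => hg i xstar
    simp only [surrogate]
    linarith
  rw [norm_sub_rev] at hgrowth
  linarith

/-- the surrogate minimizer stays in a ball around `x*`
controlled by the surrogate gap. -/
theorem stmt_14 (p n : ℕ) (μ : ℝ) (hμ : 0 < μ)
    (f₀ : EuclideanSpace ℝ (Fin p) → ℝ)
    (f : Fin n → EuclideanSpace ℝ (Fin p) → ℝ)
    (hf₀ : ConvexOn ℝ Set.univ (fun x => f₀ x - μ / 2 * ‖x‖ ^ 2))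
    (hf : ∀ i, ConvexOn ℝ Set.univ (f i))
    (j : Fin n) (xa g : Fin n → EuclideanSpace ℝ (Fin p))
    (hg : ∀ i z, f i (xa i) + ⟪g i, z - xa i⟫ ≤ f i z)
    (xstar : EuclideanSpace ℝ (Fin p))
    (hxstar : ∀ x, f₀ xstar + ∑ i, f i xstar ≤ f₀ x + ∑ i, f i x)
    (xp : EuclideanSpace ℝ (Fin p))
    (hxp : ∀ z,
      f₀ xp + f j xp + ∑ i ∈ Finset.univ.erase j, (f i (xa i) + ⟪g i, xp - xa i⟫) ≤
        f₀ z + f j z + ∑ i ∈ Finset.univ.erase j, (f i (xa i) + ⟪g i, z - xa i⟫)) :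
    μ / 2 * ‖xp - xstar‖ ^ 2 ≤
      (f₀ xstar + ∑ i, f i xstar) -
        (f₀ xp + f j xp +
          ∑ i ∈ Finset.univ.erase j, (f i (xa i) + ⟪g i, xp - xa i⟫)) :=
  stmt_14_general p n μ f₀ f hf₀ hf j xa g hg xstar xp hxp
end
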